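/- Let V have basis {v_k : k ∈ ℤ}. For fixed a ∈ ℂ*, the action (t1^m t2^n).v_k = (-1)^m (a q^k)^n v_{k+m} defines an L-module structure on V. -/
import Mathlib


/-- Bracket of basis elements of the centerless q-analog Virasoro-like algebra. -/
noncomputable def qlBr (q : ℂ) (p r : ℤ × ℤ) : (ℤ × ℤ) →₀ ℂ :=
  if p.1 + r.1 = 0 ∧ p.2 + r.2 = 0 then 0
  else (q ^ (p.2 * r.1) - q ^ (p.1 * r.2)) • Finsupp.single (p.1 + r.1, p.2 + r.2) 1

/-- Action of the basis element `t1^{p.1} t2^{p.2}` on the basis vector `v_k`: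
`(t1^m t2^n).v_k = (-1)^m (a q^k)^n v_{k+m}`. -/
noncomputable def act (q a : ℂ) (p : ℤ × ℤ) (k : ℤ) : ℤ →₀ ℂ :=
  ((-1 : ℂ) ^ p.1 * (a * q ^ k) ^ p.2) • Finsupp.single (k + p.1) (1 : ℂ)

/-- The action extended linearly to all of `V`. -/
noncomputable def actExt (q a : ℂ) (p : ℤ × ℤ) (f : ℤ →₀ ℂ) : ℤ →₀ ℂ :=
  f.sum fun k c => c • act q a p k

/-- The action of a general element of `L`. -/
noncomputable def actL (q a : ℂ) (x : (ℤ × ℤ) →₀ ℂ) (f : ℤ →₀ ℂ) : ℤ →₀ ℂ :=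
  x.sum fun p c => c • actExt q a p f

lemma actExt_single (q a : ℂ) (p : ℤ × ℤ) (k : ℤ) (c : ℂ) :
    actExt q a p (Finsupp.single k c) =
      Finsupp.single (k + p.1) (c * ((-1 : ℂ) ^ p.1 * (a * q ^ k) ^ p.2)) := by
  unfold actExt
  rcases eq_or_ne c 0 with h | h
  · simp [h]
  · rw [Finsupp.sum_single_index (by simp)]
    simp only [act, Finsupp.smul_single, smul_eq_mul, mul_one]

/-- This action makes `V` an `L`-module: `[x,y].v = x.(y.v) - y.(x.v)` for all
basis elements `x, y` of `L` and all basis vectors `v_k`. -/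
theorem act_is_module (q a : ℂ) (hq0 : q ≠ 0) (hq : ∀ n : ℕ, 0 < n → q ^ n ≠ 1)
    (ha : a ≠ 0) (p r : ℤ × ℤ) (hp : p ≠ (0, 0)) (hr : r ≠ (0, 0)) (k : ℤ) :
    actL q a (qlBr q p r) (Finsupp.single k 1) =
      actExt q a p (actExt q a r (Finsupp.single k 1)) -
        actExt q a r (actExt q a p (Finsupp.single k 1)) := by
  have haq : a * q ^ k ≠ 0 := mul_ne_zero ha (zpow_ne_zero _ hq0)
  have h1 : (-1 : ℂ) ≠ 0 := by norm_num
  rw [actExt_single, actExt_single, actExt_single, actExt_single]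
  rw [show k + r.1 + p.1 = k + (p.1 + r.1) by ring, show k + p.1 + r.1 = k + (p.1 + r.1) by ring,
    ← Finsupp.single_sub]
  have key : 1 * ((-1:ℂ) ^ r.1 * (a * q ^ k) ^ r.2) * ((-1:ℂ) ^ p.1 * (a * q ^ (k + r.1)) ^ p.2) -
      1 * ((-1:ℂ) ^ p.1 * (a * q ^ k) ^ p.2) * ((-1:ℂ) ^ r.1 * (a * q ^ (k + p.1)) ^ r.2) =
      (q ^ (p.2 * r.1) - q ^ (p.1 * r.2)) *
        ((-1:ℂ) ^ (p.1 + r.1) * (a * q ^ k) ^ (p.2 + r.2)) := by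
    rw [zpow_add₀ h1, zpow_add₀ haq, zpow_add₀ hq0 k r.1, zpow_add₀ hq0 k p.1,
      mul_zpow, mul_zpow, mul_zpow, mul_zpow, mul_zpow, mul_zpow,
      ← zpow_mul q k, ← zpow_mul q k, ← zpow_mul q r.1, ← zpow_mul q p.1]
    rw [show r.1 * p.2 = p.2 * r.1 by ring]
    ring
  unfold qlBr actL
  split_ifs with h
  · rw [Finsupp.sum_zero_index]
    have e1 : p.1 + r.1 = 0 := h.1
    have e2 : p.2 + r.2 = 0 := h.2
    rw [show p.2 * r.1 = p.1 * r.2 by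
      rw [show r.1 = -p.1 by omega, show r.2 = -p.2 by omega]; ring] at key
    rw [sub_self, zero_mul] at key
    rw [key, Finsupp.single_zero]
  · rw [Finsupp.smul_single, smul_eq_mul, mul_one,
      Finsupp.sum_single_index (by simp), actExt_single, Finsupp.smul_single, smul_eq_mul,
      one_mul, key]
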